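/- arXiv:1209.3467 — 3 statements merged into one kernel-verified Lean document; each statement's English description precedes it below -/
import Mathlib

section
/- Let G be a group and let n, i be positive integers with 1 ≤ i ≤ n. Then [γ_i(G)^{4^{n-i}}, G] ≤ N_{n+1,i+1}(G). -/
/-- `H^m`: the subgroup generated by the `m`-th powers of elements of `H`. -/
def sPow {G : Type*} [Group G] (H : Subgroup G) (m : ℕ) : Subgroup G :=
  Subgroup.closure ((fun h => h ^ m) '' (H : Set G))

/-- `γ_n(G)`, the lower central series indexed so that `γ_1(G) = G`. -/
def gamma (G : Type*) [Group G] (n : ℕ) : Subgroup G :=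
  (⊤ : Subgroup G).lowerCentralSeries (n - 1)

/-- `N_{n,k}(G) = γ_k(G)^{4^{n-k}} ⋯ γ_n(G)` (product of normal subgroups = join). -/
def Nnk (G : Type*) [Group G] (n k : ℕ) : Subgroup G :=
  ⨆ i ∈ Finset.Icc k n, sPow (gamma G i) (4 ^ (n - i))

/-- The `λ̄`-series: `λ̄_1(G) = G`, `λ̄_{n+1}(G) = λ̄_n(G)^4 [λ̄_n(G), G]`. -/
def lambdaBar (G : Type*) [Group G] : ℕ → Subgroup G
  | 0 => ⊤
  | 1 => ⊤
  | (n + 2) => sPow (lambdaBar G (n + 1)) 4 ⊔ ⁅lambdaBar G (n + 1), (⊤ : Subgroup G)⁆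

/-- The lower `p`-central series: `λ_1(G) = G`, `λ_{n+1}(G) = λ_n(G)^p [λ_n(G), G]`. -/
def lowP (G : Type*) [Group G] (p : ℕ) : ℕ → Subgroup G
  | 0 => ⊤
  | 1 => ⊤
  | (n + 2) => sPow (lowP G p (n + 1)) p ⊔ ⁅lowP G p (n + 1), (⊤ : Subgroup G)⁆

/-- `Ω_i(G)`: subgroup generated by elements of order dividing `p^i`. -/
def Omega (G : Type*) [Group G] (p i : ℕ) : Subgroup G :=
  Subgroup.closure {x : G | x ^ p ^ i = 1}

/-- A finite `p`-group is `p`-central if `Ω_1(G) ≤ Z(G)` for odd `p`,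
resp. `Ω_2(G) ≤ Z(G)` for `p = 2`. -/
def IsPCentral (p : ℕ) (G : Type*) [Group G] : Prop :=
  if p = 2 then Omega G 2 2 ≤ Subgroup.center G else Omega G p 1 ≤ Subgroup.center G

instance gamma_normal (G : Type*) [Group G] (n : ℕ) : (gamma G n).Normal :=
  inferInstanceAs ((⊤ : Subgroup G).lowerCentralSeries (n - 1)).Normal

instance sPow_normal {G : Type*} [Group G] (H : Subgroup G) [hH : H.Normal] (m : ℕ) :
    (sPow H m).Normal := by
  constructor
  intro x hx g
  induction hx using Subgroup.closure_induction with
  | mem y hy =>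
    obtain ⟨h, hh, rfl⟩ := hy
    exact Subgroup.subset_closure ⟨g * h * g⁻¹, hH.conj_mem h hh g, by
      simp [conj_pow]⟩
  | one => simpa using (sPow H m).one_mem
  | mul a b _ _ ha hb =>
    have : g * (a * b) * g⁻¹ = (g * a * g⁻¹) * (g * b * g⁻¹) := by group
    rw [this]; exact (sPow H m).mul_mem ha hb
  | inv a _ ha =>
    have : g * a⁻¹ * g⁻¹ = (g * a * g⁻¹)⁻¹ := by group
    rw [this]; exact (sPow H m).inv_mem ha

theorem normal_iSup {G : Type*} [Group G] {ι : Sort*} (f : ι → Subgroup G)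
    (h : ∀ i, (f i).Normal) : (⨆ i, f i).Normal := by
  constructor
  intro x hx g
  refine Subgroup.iSup_induction f (C := fun y => g * y * g⁻¹ ∈ ⨆ i, f i) hx
    (fun i y hy => Subgroup.mem_iSup_of_mem i ((h i).conj_mem y hy g)) (by simpa using Subgroup.one_mem (⨆ i, f i)) ?_
  intro a b ha hb
  have : g * (a * b) * g⁻¹ = (g * a * g⁻¹) * (g * b * g⁻¹) := by group
  rw [this]; exact Subgroup.mul_mem _ ha hb

instance Nnk_normal (G : Type*) [Group G] (n k : ℕ) : (Nnk G n k).Normal :=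
  normal_iSup _ fun i => normal_iSup _ fun _ => inferInstance

instance lambdaBar_normal (G : Type*) [Group G] : ∀ n, (lambdaBar G n).Normal
  | 0 => inferInstanceAs (⊤ : Subgroup G).Normal
  | 1 => inferInstanceAs (⊤ : Subgroup G).Normal
  | (n + 2) => by
    haveI := lambdaBar_normal G (n + 1)
    exact inferInstanceAs
      (sPow (lambdaBar G (n + 1)) 4 ⊔ ⁅lambdaBar G (n + 1), (⊤ : Subgroup G)⁆).Normal

instance lowP_normal (G : Type*) [Group G] (p : ℕ) : ∀ n, (lowP G p n).Normal
  | 0 => inferInstanceAs (⊤ : Subgroup G).Normal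
  | 1 => inferInstanceAs (⊤ : Subgroup G).Normal
  | (n + 2) => by
    haveI := lowP_normal G p (n + 1)
    exact inferInstanceAs
      (sPow (lowP G p (n + 1)) p ⊔ ⁅lowP G p (n + 1), (⊤ : Subgroup G)⁆).Normal

/-!
Induction on `n - i`. Modulo `D = N_{n+1,i+1}`, the subgroup `N = N_{n,i+1}` is central by the
induction hypothesis for the indices `j > i`; in particular it is abelian, and it has exponent
dividing `4` because the fourth power of each generator `x ^ 4 ^ (n - j)` lies in `D`. For
`y = x ^ 4 ^ (n - i - 1)` with `x ∈ γ_i` the induction hypothesis gives `⁅y, g⁆ ∈ N`, so modulo `D`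
the commutator `⁅y, g⁆` commutes with `y` and `⁅y ^ 4, g⁆ = ⁅y, g⁆ ^ 4 = 1`.
-/

open scoped commutatorElement

section

variable {G : Type*} [Group G]

theorem commutatorElement_pow_left_of_commute {y g : G} (h : Commute y ⁅y, g⁆) (m : ℕ) :
    ⁅y ^ m, g⁆ = ⁅y, g⁆ ^ m := by
  induction m with
  | zero => simp
  | succ m ih =>
    calc ⁅y ^ (m + 1), g⁆ = y * ⁅y ^ m, g⁆ * y⁻¹ * ⁅y, g⁆ := by
          rw [pow_succ']; simp only [commutatorElement_def]; group
      _ = ⁅y, g⁆ ^ (m + 1) := by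
          rw [ih, (h.pow_right m).eq, mul_inv_cancel_right, pow_succ]

theorem commutatorElement_pow_mem {L : Subgroup G} [L.Normal] {y g : G} {m : ℕ}
    (hcomm : ⁅⁅y, g⁆, y⁆ ∈ L) (hpow : ⁅y, g⁆ ^ m ∈ L) : ⁅y ^ m, g⁆ ∈ L := by
  let π := QuotientGroup.mk' L
  rw [← QuotientGroup.eq_one_iff] at hcomm hpow ⊢
  have hy : Commute (π y) ⁅π y, π g⁆ := by
    change π ⁅⁅y, g⁆, y⁆ = 1 at hcomm
    rw [map_commutatorElement, map_commutatorElement] at hcomm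
    exact (commutatorElement_eq_one_iff_commute.mp hcomm).symm
  change π ⁅y ^ m, g⁆ = 1
  rwa [map_commutatorElement, map_pow, commutatorElement_pow_left_of_commute hy,
    ← map_commutatorElement, ← map_pow]

theorem pow_mem_of_commutator_closure_le {S : Set G} {L : Subgroup G} [L.Normal] {m : ℕ}
    (hcomm : ⁅Subgroup.closure S, Subgroup.closure S⁆ ≤ L) (hS : ∀ s ∈ S, s ^ m ∈ L) {a : G}
    (ha : a ∈ Subgroup.closure S) : a ^ m ∈ L := by
  simp only [← QuotientGroup.eq_one_iff, QuotientGroup.mk_pow]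
  induction ha using Subgroup.closure_induction with
  | mem s hs => exact (QuotientGroup.eq_one_iff _).mpr (hS s hs)
  | one => simp
  | mul x y hx hy ihx ihy =>
    have hxy : Commute (x : G ⧸ L) y := commutatorElement_eq_one_iff_commute.mp <|
      (QuotientGroup.eq_one_iff _).mpr (hcomm (Subgroup.commutator_mem_commutator hx hy))
    rw [QuotientGroup.mk_mul, hxy.mul_pow, ihx, ihy, one_mul]
  | inv x _ ihx => rw [QuotientGroup.mk_inv, inv_pow, ihx, inv_one]

theorem commutator_top_le_iff {H L : Subgroup G} [L.Normal] :
    ⁅H, ⊤⁆ ≤ L ↔ H ≤ Subgroup.upperCentralSeriesStep L := by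
  rw [Subgroup.commutator_le, SetLike.le_def]
  simp [Subgroup.mem_upperCentralSeriesStep]

theorem commutator_sPow_top_le_iff {H L : Subgroup G} [L.Normal] {m : ℕ} :
    ⁅sPow H m, ⊤⁆ ≤ L ↔ ∀ x ∈ H, ∀ g, ⁅x ^ m, g⁆ ∈ L := by
  simp [commutator_top_le_iff, sPow, Subgroup.closure_le, Set.subset_def,
    Subgroup.mem_upperCentralSeriesStep]

theorem sPow_one (H : Subgroup G) : sPow H 1 = H := by
  simp [sPow]

theorem pow_mem_sPow {H : Subgroup G} {x : G} (hx : x ∈ H) (m : ℕ) : x ^ m ∈ sPow H m :=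
  Subgroup.subset_closure ⟨x, hx, rfl⟩

theorem commutator_gamma_top_le (i : ℕ) : ⁅gamma G i, ⊤⁆ ≤ gamma G (i + 1) := by
  cases i with
  | zero => simp [gamma]
  | succ i => exact (Subgroup.lowerCentralSeries_succ _ i).ge

theorem sPow_gamma_le_Nnk {n k j : ℕ} (hkj : k ≤ j) (hjn : j ≤ n) :
    sPow (gamma G j) (4 ^ (n - j)) ≤ Nnk G n k :=
  le_iSup₂ (f := fun j (_ : j ∈ Finset.Icc k n) => sPow (gamma G j) (4 ^ (n - j))) j
    (Finset.mem_Icc.mpr ⟨hkj, hjn⟩)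

theorem Nnk_antitone {n k k' : ℕ} (h : k ≤ k') : Nnk G n k' ≤ Nnk G n k :=
  iSup₂_le fun _ hj => sPow_gamma_le_Nnk (h.trans (Finset.mem_Icc.mp hj).1)
    (Finset.mem_Icc.mp hj).2

theorem Nnk_eq_closure (n k : ℕ) :
    Nnk G n k =
      Subgroup.closure (⋃ j ∈ Finset.Icc k n, (· ^ 4 ^ (n - j)) '' (gamma G j : Set G)) := by
  simp only [Nnk, sPow, Subgroup.closure_iUnion]

theorem commutator_Nnk_top_le {n k : ℕ}
    (h : ∀ j ∈ Finset.Icc k n, ⁅sPow (gamma G j) (4 ^ (n - j)), ⊤⁆ ≤ Nnk G (n + 1) (j + 1)) :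
    ⁅Nnk G n k, ⊤⁆ ≤ Nnk G (n + 1) k := by
  rw [commutator_top_le_iff]
  refine iSup₂_le fun j hj => commutator_top_le_iff.mp ?_
  exact (h j hj).trans (Nnk_antitone ((Finset.mem_Icc.mp hj).1.trans j.le_succ))

theorem pow_four_mem_Nnk_succ {n k : ℕ} (h : ⁅Nnk G n k, Nnk G n k⁆ ≤ Nnk G (n + 1) k)
    {a : G} (ha : a ∈ Nnk G n k) : a ^ 4 ∈ Nnk G (n + 1) k := by
  rw [Nnk_eq_closure] at h ha
  refine pow_mem_of_commutator_closure_le h ?_ ha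
  simp only [Set.mem_iUnion, Set.mem_image]
  rintro _ ⟨j, hj, x, hx, rfl⟩
  obtain ⟨hkj, hjn⟩ := Finset.mem_Icc.mp hj
  have hexp : (x ^ 4 ^ (n - j)) ^ 4 = x ^ 4 ^ (n + 1 - j) := by
    rw [← pow_mul, ← pow_succ, Nat.sub_add_comm hjn]
  rw [hexp]
  exact sPow_gamma_le_Nnk hkj (by omega) (pow_mem_sPow hx _)

theorem commutator_sPow_gamma_top_le (e i : ℕ) :
    ⁅sPow (gamma G i) (4 ^ e), ⊤⁆ ≤ Nnk G (i + e + 1) (i + 1) := by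
  induction e using Nat.strong_induction_on generalizing i with
  | _ e ih =>
  cases e with
  | zero =>
    rw [pow_zero, sPow_one]
    refine (commutator_gamma_top_le i).trans ?_
    simpa [sPow_one] using sPow_gamma_le_Nnk (G := G) le_rfl (le_refl (i + 1))
  | succ e =>
    set N := Nnk G (i + e + 1) (i + 1)
    set D := Nnk G (i + e + 1 + 1) (i + 1)
    have hN : ⁅N, ⊤⁆ ≤ D := commutator_Nnk_top_le fun j hj => by
      obtain ⟨hij, hjn⟩ := Finset.mem_Icc.mp hj
      simpa [Nat.add_sub_cancel' hjn] using ih (i + e + 1 - j) (by omega) j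
    rw [commutator_sPow_top_le_iff]
    intro x hx g
    have hxg : ⁅x ^ 4 ^ e, g⁆ ∈ N :=
      ih e e.lt_succ_self i
        (Subgroup.commutator_mem_commutator (pow_mem_sPow hx _) (Subgroup.mem_top g))
    rw [pow_succ, pow_mul]
    exact commutatorElement_pow_mem
      (hN (Subgroup.commutator_mem_commutator hxg (Subgroup.mem_top _)))
      (pow_four_mem_Nnk_succ ((Subgroup.commutator_mono le_rfl le_top).trans hN) hxg)

end

theorem stmt_1_general (G : Type*) [Group G] (n i : ℕ) (hin : i ≤ n) :
    ⁅sPow (gamma G i) (4 ^ (n - i)), (⊤ : Subgroup G)⁆ ≤ Nnk G (n + 1) (i + 1) := by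
  simpa [Nat.add_sub_cancel' hin] using commutator_sPow_gamma_top_le (G := G) (n - i) i

theorem stmt_1 (G : Type*) [Group G] (n i : ℕ) (hi : 1 ≤ i) (hin : i ≤ n) :
    ⁅sPow (gamma G i) (4 ^ (n - i)), (⊤ : Subgroup G)⁆ ≤ Nnk G (n + 1) (i + 1) :=
  stmt_1_general G n i hin
end

section
/- Let G be a group and let m, n be positive integers. Then λ̄_n(G)^{4^m} ≤ λ̄_{n+m}(G) and [λ̄_n(G), λ̄_m(G)] ≤ λ̄_{n+m}(G). -/
/-! Both inclusions are proved by induction on `m`. The power inclusion only uses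
`(H^{4^m})^4 ⊇ H^{4^{m+1}}` and `λ̄_k^4 ≤ λ̄_{k+1}`. For the commutator inclusion write
`λ̄_{m+1} = λ̄_m^4 [λ̄_m, G]` and work modulo `N = λ̄_{n+m+1}`: the three subgroups lemma
handles `[λ̄_n, [λ̄_m, G]]`, while for `a ∈ λ̄_n`, `b ∈ λ̄_m` the commutator `[a, b]` lies in
`λ̄_{n+m}`, which commutes with `b` modulo `N`, so `[a, b^4] ≡ [a, b]^4 ≡ 1`. -/

open scoped commutatorElement

section General

variable {G : Type*} [Group G]

theorem commutatorElement_pow_right {a b : G} (h : Commute ⁅a, b⁆ b) (k : ℕ) :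
    ⁅a, b ^ k⁆ = ⁅a, b⁆ ^ k := by
  rw [commutatorElement_def, ← conj_pow, show a * b * a⁻¹ = ⁅a, b⁆ * b by group, h.mul_pow,
    mul_inv_cancel_right]

theorem sPow_mono {H K : Subgroup G} (h : H ≤ K) (m : ℕ) : sPow H m ≤ sPow K m :=
  Subgroup.closure_mono (Set.image_mono h)

theorem sPow_le_self (H : Subgroup G) (m : ℕ) : sPow H m ≤ H :=
  Subgroup.closure_le _ |>.mpr <| Set.image_subset_iff.mpr fun _ hh => H.pow_mem hh m

theorem sPow_mul_le (H : Subgroup G) (a b : ℕ) : sPow H (a * b) ≤ sPow (sPow H a) b := by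
  refine Subgroup.closure_le _ |>.mpr <| Set.image_subset_iff.mpr fun h hh => ?_
  rw [Set.mem_preimage, pow_mul]
  exact Subgroup.subset_closure ⟨h ^ a, Subgroup.subset_closure ⟨h, hh, rfl⟩, rfl⟩

theorem map_sPow {G' : Type*} [Group G'] (f : G →* G') (H : Subgroup G) (m : ℕ) :
    (sPow H m).map f = sPow (H.map f) m := by
  simp only [sPow, MonoidHom.map_closure, Set.image_image, map_pow, Subgroup.coe_map]

theorem QuotientGroup.map_mk'_eq_bot_iff {N : Subgroup G} [N.Normal] {H : Subgroup G} :
    H.map (QuotientGroup.mk' N) = ⊥ ↔ H ≤ N := by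
  rw [Subgroup.map_eq_bot_iff, QuotientGroup.ker_mk']

theorem commutator_sPow_eq_bot {A B : Subgroup G} {k : ℕ} (hcomm : ⁅⁅A, B⁆, B⁆ = ⊥)
    (hpow : sPow ⁅A, B⁆ k = ⊥) : ⁅A, sPow B k⁆ = ⊥ := by
  rw [Subgroup.commutator_comm, Subgroup.commutator_eq_bot_iff_le_centralizer, sPow,
    Subgroup.closure_le]
  rintro _ ⟨b, hb, rfl⟩
  refine Subgroup.mem_centralizer_iff_commutator_eq_one.mpr fun a ha => ?_
  have hab : ⁅a, b⁆ ∈ ⁅A, B⁆ := Subgroup.commutator_mem_commutator ha hb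
  have hb_comm : Commute ⁅a, b⁆ b := commutatorElement_eq_one_iff_commute.mp <| by
    simpa [hcomm] using Subgroup.commutator_mem_commutator hab hb
  rw [commutatorElement_pow_right hb_comm, ← Subgroup.mem_bot, ← hpow]
  exact Subgroup.subset_closure ⟨_, hab, rfl⟩

section ModNormal

variable {N : Subgroup G} [N.Normal]

theorem commutator_sPow_le {A B : Subgroup G} {k : ℕ} (hcomm : ⁅⁅A, B⁆, B⁆ ≤ N)
    (hpow : sPow ⁅A, B⁆ k ≤ N) : ⁅A, sPow B k⁆ ≤ N := by
  simp only [← QuotientGroup.map_mk'_eq_bot_iff, Subgroup.map_commutator, map_sPow] at *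
  exact commutator_sPow_eq_bot hcomm hpow

theorem commutator_sup_le {A B C : Subgroup G} (hB : ⁅A, B⁆ ≤ N) (hC : ⁅A, C⁆ ≤ N) :
    ⁅A, B ⊔ C⁆ ≤ N := by
  simp only [← QuotientGroup.map_mk'_eq_bot_iff, Subgroup.map_commutator, Subgroup.map_sup,
    Subgroup.commutator_comm (Subgroup.map _ A),
    Subgroup.commutator_eq_bot_iff_le_centralizer] at *
  exact sup_le hB hC

theorem commutator_commutator_le_of_rotate {H₁ H₂ H₃ : Subgroup G} (h₁ : ⁅⁅H₂, H₃⁆, H₁⁆ ≤ N)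
    (h₂ : ⁅⁅H₃, H₁⁆, H₂⁆ ≤ N) : ⁅⁅H₁, H₂⁆, H₃⁆ ≤ N := by
  simp only [← QuotientGroup.map_mk'_eq_bot_iff, Subgroup.map_commutator] at *
  exact Subgroup.commutator_commutator_eq_bot_of_rotate h₁ h₂

end ModNormal

end General

section LambdaBar

variable {G : Type*} [Group G]

theorem lambdaBar_succ {n : ℕ} (hn : n ≠ 0) :
    lambdaBar G (n + 1) = sPow (lambdaBar G n) 4 ⊔ ⁅lambdaBar G n, (⊤ : Subgroup G)⁆ := by
  obtain ⟨k, rfl⟩ := Nat.exists_eq_succ_of_ne_zero hn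
  rfl

theorem sPow_lambdaBar_le_succ (n : ℕ) : sPow (lambdaBar G n) 4 ≤ lambdaBar G (n + 1) := by
  rcases n with _ | n
  · exact le_top
  · exact le_sup_left

theorem commutator_lambdaBar_top_le_succ (n : ℕ) :
    ⁅lambdaBar G n, (⊤ : Subgroup G)⁆ ≤ lambdaBar G (n + 1) := by
  rcases n with _ | n
  · exact le_top
  · exact le_sup_right

theorem lambdaBar_succ_le (n : ℕ) : lambdaBar G (n + 1) ≤ lambdaBar G n := by
  rcases n with _ | n
  · exact le_rfl
  · exact sup_le (sPow_le_self _ _) (Subgroup.commutator_le_left _ _)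

theorem lambdaBar_antitone : Antitone (lambdaBar G) :=
  antitone_nat_of_succ_le lambdaBar_succ_le

theorem sPow_lambdaBar_pow_le (n m : ℕ) :
    sPow (lambdaBar G n) (4 ^ m) ≤ lambdaBar G (n + m) := by
  induction m with
  | zero => exact sPow_le_self _ _
  | succ m ih =>
    calc sPow (lambdaBar G n) (4 ^ (m + 1))
        ≤ sPow (sPow (lambdaBar G n) (4 ^ m)) 4 := pow_succ 4 m ▸ sPow_mul_le _ _ _
      _ ≤ sPow (lambdaBar G (n + m)) 4 := sPow_mono ih 4
      _ ≤ lambdaBar G (n + m + 1) := sPow_lambdaBar_le_succ _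

theorem commutator_lambdaBar_le_of_one_le {m : ℕ} (hm : 1 ≤ m) (n : ℕ) :
    ⁅lambdaBar G n, lambdaBar G m⁆ ≤ lambdaBar G (n + m) := by
  induction m, hm using Nat.le_induction generalizing n with
  | base => exact commutator_lambdaBar_top_le_succ n
  | succ m hm ih =>
    rw [lambdaBar_succ (by omega)]
    refine commutator_sup_le (commutator_sPow_le ?_ ?_) ?_
    · calc ⁅⁅lambdaBar G n, lambdaBar G m⁆, lambdaBar G m⁆
          ≤ ⁅lambdaBar G (n + m), lambdaBar G m⁆ := Subgroup.commutator_mono (ih n) le_rfl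
        _ ≤ lambdaBar G (n + m + m) := ih _
        _ ≤ lambdaBar G (n + (m + 1)) := lambdaBar_antitone (by omega)
    · exact (sPow_mono (ih n) 4).trans (sPow_lambdaBar_le_succ _)
    · rw [Subgroup.commutator_comm]
      refine commutator_commutator_le_of_rotate ?_ ?_
      · calc ⁅⁅⊤, lambdaBar G n⁆, lambdaBar G m⁆
            ≤ ⁅lambdaBar G (n + 1), lambdaBar G m⁆ := by
              rw [Subgroup.commutator_comm ⊤]
              exact Subgroup.commutator_mono (commutator_lambdaBar_top_le_succ n) le_rfl
          _ ≤ lambdaBar G (n + (m + 1)) := by rw [← add_assoc, add_right_comm]; exact ih _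
      · exact (Subgroup.commutator_mono (ih n) le_rfl).trans (commutator_lambdaBar_top_le_succ _)

theorem commutator_lambdaBar_le (n m : ℕ) :
    ⁅lambdaBar G n, lambdaBar G m⁆ ≤ lambdaBar G (n + m) := by
  rcases Nat.eq_zero_or_pos m with rfl | hm
  · exact (commutator_lambdaBar_le_of_one_le le_rfl n).trans (lambdaBar_succ_le n)
  · exact commutator_lambdaBar_le_of_one_le hm n

end LambdaBar

theorem stmt_6_general (G : Type*) [Group G] (m n : ℕ) :
    sPow (lambdaBar G n) (4 ^ m) ≤ lambdaBar G (n + m) ∧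
    ⁅lambdaBar G n, lambdaBar G m⁆ ≤ lambdaBar G (n + m) :=
  ⟨sPow_lambdaBar_pow_le n m, commutator_lambdaBar_le n m⟩

theorem stmt_6 (G : Type*) [Group G] (m n : ℕ) (hm : 1 ≤ m) (hn : 1 ≤ n) :
    sPow (lambdaBar G n) (4 ^ m) ≤ lambdaBar G (n + m) ∧
    ⁅lambdaBar G n, lambdaBar G m⁆ ≤ lambdaBar G (n + m) :=
  stmt_6_general G m n
end

section
/- Let p be a prime, let G be a finite p-central group, and let e be the nonnegative integer with exp(G/Z(G)) = p^e. (a) If p is odd, then (xy)^{p^e} = x^{p^e} y^{p^e} for all x, y ∈ G (so the p^e-th power map is an endomorphism of G and the exponential rank of G is 0). (b) If p = 2 and G is not abelian, then (xy)^{2^{e+1}} = x^{2^{e+1}} y^{2^{e+1}} for all x, y ∈ G, and there exist x, y ∈ G with (xy)^{2^e} ≠ x^{2^e} y^{2^e} (so the exponential rank of G is 1). -/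
/-!
Write `Ω = Ω₁(G)`. In a `p`-central group `Ω` is central and consists of the elements of order
dividing `p`. The key fact is that `p`-th roots of a central element agree modulo `Ω`: if
`u ^ p = v ^ p` is central, then `(u⁻¹ * v) ^ p = 1`. It is proved by induction on `|G|`. Applied
inside a maximal subgroup containing `x` and `g⁻¹ * x * g`, it shows that `x` is central modulo `Ω`
whenever `x ^ p` is central; hence `G ⧸ Ω` is again `p`-central, and the statement for `G ⧸ Ω`
lifts to `G` through `(u * d) ^ p = u ^ p * d ^ p * z ^ (p.choose 2)`, where `z ∈ Ω` measures the
failure of `u` and `d` to commute.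

For odd `p` the correction `z ^ (p.choose 2)` vanishes, and induction on `e` through `G ⧸ Ω`, whose
`p ^ (e - 1)`-th powers are central, shows that `x ↦ x ^ p ^ e` is a homomorphism. For `p = 2` the
same induction only gives `(x * y) ^ 2 ^ e = x ^ 2 ^ e * y ^ 2 ^ e * ω` with `ω ∈ Ω`, and `ω`
disappears after squaring. Conversely, if `G` were `2 ^ e`-abelian, comparing the two expressions
for `(x * y) ^ 2 ^ e` would make `G ⧸ Ω` `2 ^ (e - 1)`-abelian, and by induction every
`2 ^ (e - 1)`-th power would be central in `G`, contradicting `exp (G ⧸ Z(G)) = 2 ^ e`.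
-/

open Subgroup

section General

variable {G : Type*} [Group G]

instance Omega.characteristic (p i : ℕ) : (Omega G p i).Characteristic := by
  refine characteristic_iff_map_le.mpr fun ϕ => ?_
  rw [Omega, MonoidHom.map_closure]
  refine closure_mono ?_
  rintro _ ⟨x, hx, rfl⟩
  rw [Set.mem_ofPred_eq, ← map_pow, hx.out, map_one]

theorem Omega_le_center_iff {p i : ℕ} :
    Omega G p i ≤ center G ↔ ∀ x : G, x ^ p ^ i = 1 → x ∈ center G :=
  closure_le _

theorem Subgroup.card_lt_of_ne_top [Finite G] {H : Subgroup G} (h : H ≠ ⊤) :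
    Nat.card H < Nat.card G := by
  rw [← H.card_mul_index]
  exact lt_mul_of_one_lt_right Nat.card_pos (one_lt_index_of_ne_top h)

theorem QuotientGroup.card_lt_of_ne_bot [Finite G] {N : Subgroup G} [N.Normal] (h : N ≠ ⊥) :
    Nat.card (G ⧸ N) < Nat.card G := by
  rw [N.card_eq_card_quotient_mul_card_subgroup]
  exact lt_mul_of_one_lt_right Nat.card_pos ((one_lt_card_iff_ne_bot N).mpr h)

theorem QuotientGroup.exists_mem_eq_mul_of_mk_eq {N : Subgroup G} {a b : G}
    (h : (a : G ⧸ N) = b) : ∃ z ∈ N, b = a * z :=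
  ⟨a⁻¹ * b, QuotientGroup.eq.mp h, (mul_inv_cancel_left a b).symm⟩

theorem QuotientGroup.exists_mul_eq_mul_mul_of_mk_mem_center {N : Subgroup G} [N.Normal] {a : G}
    (ha : (a : G ⧸ N) ∈ center (G ⧸ N)) (g : G) : ∃ z ∈ N, a * g = g * a * z :=
  QuotientGroup.exists_mem_eq_mul_of_mk_eq (mem_center_iff.mp ha g)

theorem exponent_quotient_center_dvd_iff {n : ℕ} :
    Monoid.exponent (G ⧸ center G) ∣ n ↔ ∀ x : G, x ^ n ∈ center G := by
  simp only [Monoid.exponent_dvd_iff_forall_pow_eq_one, QuotientGroup.forall_mk,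
    ← QuotientGroup.mk_pow, QuotientGroup.eq_one_iff]

theorem conj_pow_eq_of_pow_mem_center {x : G} {n : ℕ} (hx : x ^ n ∈ center G) (g : G) :
    (g⁻¹ * x * g) ^ n = x ^ n := by
  have h := conj_pow (a := g⁻¹) (b := x) (i := n)
  rwa [inv_inv, mul_assoc g⁻¹ (x ^ n), ← mem_center_iff.mp hx g, inv_mul_cancel_left] at h

theorem pow_choose_two_eq_one_of_odd {z : G} {n : ℕ} (hn : Odd n) (hz : z ^ n = 1) :
    z ^ n.choose 2 = 1 := by
  obtain ⟨k, rfl⟩ := hn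
  rw [Nat.choose_two_right, Nat.add_sub_cancel, mul_left_comm, Nat.mul_div_cancel_left _ two_pos,
    pow_mul, hz, one_pow]

theorem commute_of_mul_sq {x y : G} (h : (x * y) ^ 2 = x ^ 2 * y ^ 2) : Commute x y := by
  rw [sq, sq, sq, mul_assoc, mul_assoc, mul_left_cancel_iff, ← mul_assoc, ← mul_assoc,
    mul_right_cancel_iff] at h
  exact h.symm

theorem pow_mul_eq_mul_pow_mul_pow {a b z : G} (hz : z ∈ center G) (h : b * a = a * b * z)
    (n : ℕ) : b ^ n * a = a * b ^ n * z ^ n := by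
  induction n with
  | zero => simp
  | succ n ih =>
    rw [pow_succ, mul_assoc, h, ← mul_assoc, ← mul_assoc, ih, mul_assoc (a * b ^ n),
      ← (Commute.pow_right (mem_center_iff.mp hz b) n).eq]
    simp only [pow_succ, mul_assoc]

theorem mul_pow_eq_mul_pow_mul_pow_choose_two {a b z : G} (hz : z ∈ center G)
    (h : b * a = a * b * z) (n : ℕ) : (a * b) ^ n = a ^ n * b ^ n * z ^ n.choose 2 := by
  have hzc : ∀ w : G, Commute w z := fun w => mem_center_iff.mp hz w
  induction n with
  | zero => simp
  | succ n ih =>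
    calc (a * b) ^ (n + 1) = a ^ n * (b ^ n * a) * b * z ^ n.choose 2 := by
          rw [pow_succ, ih, mul_assoc _ (z ^ _), ← ((hzc _).pow_right _).eq]
          simp only [mul_assoc]
      _ = a ^ (n + 1) * b ^ (n + 1) * z ^ (n + 1).choose 2 := by
          rw [pow_mul_eq_mul_pow_mul_pow hz h, Nat.choose_succ_succ, Nat.choose_one_right,
            pow_add z, pow_succ a n, pow_succ b n]
          simp only [mul_assoc, ((hzc b).pow_right n).symm.left_comm]

end General

section PCentral

variable {G : Type*} [Group G] {p : ℕ}

theorem isPCentral_iff :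
    IsPCentral p G ↔ ∀ x : G, x ^ p ^ (if p = 2 then 2 else 1) = 1 → x ∈ center G := by
  rw [← Omega_le_center_iff, IsPCentral]
  split_ifs with h
  · rw [h]
  · rfl

theorem isPCentral_two_iff : IsPCentral 2 G ↔ ∀ x : G, x ^ 4 = 1 → x ∈ center G :=
  isPCentral_iff

theorem IsPCentral.mem_center_of_pow_eq_one (hc : IsPCentral p G) {x : G} (hx : x ^ p = 1) :
    x ∈ center G :=
  isPCentral_iff.mp hc x <| by split_ifs <;> simp [sq, pow_mul, hx]

theorem IsPCentral.Omega_one_le_center (hc : IsPCentral p G) : Omega G p 1 ≤ center G :=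
  Omega_le_center_iff.mpr fun _ hx => hc.mem_center_of_pow_eq_one (by rwa [pow_one] at hx)

theorem IsPCentral.mem_Omega_one_iff (hc : IsPCentral p G) {x : G} :
    x ∈ Omega G p 1 ↔ x ^ p = 1 := by
  refine ⟨fun hx => ?_, fun hx => subset_closure (by rwa [Set.mem_ofPred_eq, pow_one])⟩
  induction hx using closure_induction with
  | mem y hy => rwa [Set.mem_ofPred_eq, pow_one] at hy
  | one => exact one_pow p
  | mul y z _ _ hy hz =>
    rw [Commute.mul_pow (mem_center_iff.mp (hc.mem_center_of_pow_eq_one hz) y), hy, hz, one_mul]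
  | inv y _ hy => rw [inv_pow, hy, inv_one]

theorem IsPCentral.mem_center_of_sq_mem_Omega (hc : IsPCentral 2 G) {w : G}
    (h : w ^ 2 ∈ Omega G 2 1) : w ∈ center G :=
  isPCentral_two_iff.mp hc w <| by rwa [show 4 = 2 * 2 from rfl, pow_mul, ← hc.mem_Omega_one_iff]

theorem IsPCentral.subgroup (hc : IsPCentral p G) (H : Subgroup G) : IsPCentral p H := by
  rw [isPCentral_iff] at hc ⊢
  exact fun x hx => mem_center_iff.mpr fun y =>
    Subtype.ext (mem_center_iff.mp (hc x (by exact_mod_cast congrArg Subtype.val hx)) y)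

theorem Omega_one_ne_bot [Finite G] [Nontrivial G] [hp : Fact p.Prime] (hG : IsPGroup p G) :
    Omega G p 1 ≠ ⊥ := by
  obtain ⟨x, hx⟩ := exists_prime_orderOf_dvd_card' p
    (hG.card_eq_or_dvd.resolve_left Finite.one_lt_card.ne')
  refine (ne_bot_iff_exists_ne_one).mpr ⟨⟨x, subset_closure ?_⟩, ?_⟩
  · rw [Set.mem_ofPred_eq, pow_one, ← hx, pow_orderOf_eq_one]
  · intro h
    rw [Subtype.ext_iff] at h
    simp only [coe_one] at h
    rw [h, orderOf_one] at hx
    exact hp.out.one_lt.ne hx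

theorem IsPCentral.mul_pow_of_mem_Omega (hc : IsPCentral p G) {ω : G} (hω : ω ∈ Omega G p 1)
    (c : G) : (c * ω) ^ p = c ^ p := by
  rw [Commute.mul_pow (mem_center_iff.mp (hc.Omega_one_le_center hω) c),
    hc.mem_Omega_one_iff.mp hω, mul_one]

theorem IsPCentral.pow_mem_center_of_mk_mem_center (hc : IsPCentral p G) {a : G}
    (ha : (a : G ⧸ Omega G p 1) ∈ center (G ⧸ Omega G p 1)) : a ^ p ∈ center G :=
  mem_center_iff.mpr fun g => by
    obtain ⟨z, hz, h⟩ := QuotientGroup.exists_mul_eq_mul_mul_of_mk_mem_center ha g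
    rw [pow_mul_eq_mul_pow_mul_pow (hc.Omega_one_le_center hz) h, hc.mem_Omega_one_iff.mp hz,
      mul_one]

theorem IsPCentral.commute_pow_of_mk_mem_center (hc : IsPCentral p G) {a : G}
    (ha : (a : G ⧸ Omega G p 1) ∈ center (G ⧸ Omega G p 1)) (c : G) : Commute a (c ^ p) := by
  obtain ⟨z, hz, h⟩ := QuotientGroup.exists_mul_eq_mul_mul_of_mk_mem_center ha c
  have h' : c * a = a * c * z⁻¹ := by rw [h, mul_inv_cancel_right]
  have := pow_mul_eq_mul_pow_mul_pow (inv_mem (hc.Omega_one_le_center hz)) h' p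
  rwa [inv_pow, hc.mem_Omega_one_iff.mp hz, inv_one, mul_one, eq_comm] at this

theorem IsPCentral.mul_pow_mem_Omega_of_mk_mem_center (hc : IsPCentral p G) {a : G}
    (ha : (a : G ⧸ Omega G p 1) ∈ center (G ⧸ Omega G p 1)) (b : G) :
    (b ^ p * a ^ p)⁻¹ * (b * a) ^ p ∈ Omega G p 1 := by
  obtain ⟨z, hz, h⟩ := QuotientGroup.exists_mul_eq_mul_mul_of_mk_mem_center ha b
  rw [mul_pow_eq_mul_pow_mul_pow_choose_two (hc.Omega_one_le_center hz) h, inv_mul_cancel_left]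
  exact pow_mem hz _

theorem IsPCentral.mul_pow_of_mk_mem_center (hc : IsPCentral p G) (hp : Odd p) {a : G}
    (ha : (a : G ⧸ Omega G p 1) ∈ center (G ⧸ Omega G p 1)) (b : G) :
    (b * a) ^ p = b ^ p * a ^ p := by
  obtain ⟨z, hz, h⟩ := QuotientGroup.exists_mul_eq_mul_mul_of_mk_mem_center ha b
  rw [mul_pow_eq_mul_pow_mul_pow_choose_two (hc.Omega_one_le_center hz) h,
    pow_choose_two_eq_one_of_odd hp (hc.mem_Omega_one_iff.mp hz), mul_one]

theorem IsPCentral.quotient_Omega_of_mk_mem_center (hc : IsPCentral p G)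
    (hcen : ∀ x : G, x ^ p ∈ center G →
      (x : G ⧸ Omega G p 1) ∈ center (G ⧸ Omega G p 1)) :
    IsPCentral p (G ⧸ Omega G p 1) := by
  have hc' := isPCentral_iff.mp hc
  refine isPCentral_iff.mpr fun y hy => ?_
  induction y using QuotientGroup.induction_on with | H x => ?_
  rw [← QuotientGroup.mk_pow, QuotientGroup.eq_one_iff, hc.mem_Omega_one_iff] at hy
  exact hcen x (hc' _ (by rwa [← pow_mul, mul_comm, pow_mul]))

end PCentral

def CentralRootsAgree (p : ℕ) (G : Type*) [Group G] : Prop :=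
  ∀ u v : G, u ^ p ∈ center G → u ^ p = v ^ p → (u⁻¹ * v) ^ p = 1

section RootsAgree

variable {G : Type*} [Group G] {p : ℕ}

theorem IsPCentral.mk_mem_center_of_forall_ne_top [Finite G] [Fact p.Prime] (hG : IsPGroup p G)
    (hc : IsPCentral p G) (hM : ∀ M : Subgroup G, M ≠ ⊤ → CentralRootsAgree p M) {x : G}
    (hx : x ^ p ∈ center G) : (x : G ⧸ Omega G p 1) ∈ center (G ⧸ Omega G p 1) := by
  refine mem_center_iff.mpr fun g => ?_
  induction g using QuotientGroup.induction_on with | H g => ?_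
  rw [← QuotientGroup.mk_mul, ← QuotientGroup.mk_mul, QuotientGroup.eq, hc.mem_Omega_one_iff,
    show (g * x)⁻¹ * (x * g) = x⁻¹ * (g⁻¹ * x * g) by group]
  rcases (eq_top_or_exists_le_coatom (zpowers x)).symm with ⟨M, hMmax, hle⟩ | htop
  · have hMn : M.Normal := NormalizerCondition.normal_of_coatom M
      (Group.normalizerCondition_of_isNilpotent (h := hG.isNilpotent)) hMmax
    have hxM : x ∈ M := hle (mem_zpowers x)
    have hgxM : g⁻¹ * x * g ∈ M := by simpa using hMn.conj_mem x hxM g⁻¹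
    have := hM M hMmax.1 ⟨x, hxM⟩ ⟨_, hgxM⟩
      (mem_center_iff.mpr fun y => Subtype.ext (mem_center_iff.mp hx y))
      (Subtype.ext (conj_pow_eq_of_pow_mem_center hx g).symm)
    exact congrArg Subtype.val this
  · obtain ⟨k, rfl⟩ := mem_zpowers_iff.mp (htop ▸ mem_top g)
    rw [mul_assoc, (Commute.self_zpow x k).eq, inv_mul_cancel_left, inv_mul_cancel, one_pow]

theorem IsPCentral.centralRootsAgree_of_quotient [Fact p.Prime] (hc : IsPCentral p G)
    (hcen : ∀ x : G, x ^ p ∈ center G →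
      (x : G ⧸ Omega G p 1) ∈ center (G ⧸ Omega G p 1))
    (hQ : CentralRootsAgree p (G ⧸ Omega G p 1)) : CentralRootsAgree p G := by
  intro u v hu huv
  have hd : (u⁻¹ * v) ^ p ∈ Omega G p 1 := by
    rw [← QuotientGroup.eq_one_iff, QuotientGroup.mk_pow, QuotientGroup.mk_mul,
      QuotientGroup.mk_inv]
    refine hQ _ _ ?_ (by rw [← QuotientGroup.mk_pow, huv, QuotientGroup.mk_pow])
    rw [← QuotientGroup.mk_pow]
    exact mem_center_iff.mpr fun y => by
      induction y using QuotientGroup.induction_on with | H y => ?_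
      exact congrArg _ (mem_center_iff.mp hu y)
  suffices (u * (u⁻¹ * v)) ^ p = u ^ p * (u⁻¹ * v) ^ p by
    rwa [mul_inv_cancel_left, ← huv, left_eq_mul] at this
  rcases (Fact.out : p.Prime).eq_two_or_odd' with rfl | hodd
  -- For `p = 2` the correction `z ^ (2.choose 2) = z` need not vanish, but `u⁻¹ * v` is central.
  · have hdc : u⁻¹ * v ∈ center G := hc.mem_center_of_sq_mem_Omega hd
    exact Commute.mul_pow (mem_center_iff.mp hdc u) 2
  · refine hc.mul_pow_of_mk_mem_center hodd ?_ u
    refine (hc.quotient_Omega_of_mk_mem_center hcen).mem_center_of_pow_eq_one ?_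
    rwa [← QuotientGroup.mk_pow, QuotientGroup.eq_one_iff]

theorem IsPCentral.centralRootsAgree [Finite G] [Fact p.Prime] (hG : IsPGroup p G)
    (hc : IsPCentral p G) : CentralRootsAgree p G := by
  induction hn : Nat.card G using Nat.strong_induction_on generalizing G with | _ n ih => ?_
  rcases subsingleton_or_nontrivial G with _ | _
  · exact fun _ _ _ _ => Subsingleton.elim _ _
  have hsmall {H : Type _} [Group H] [Finite H] (hH : Nat.card H < Nat.card G)
      (hpH : IsPGroup p H) (hcH : IsPCentral p H) : CentralRootsAgree p H :=
    ih _ (hn ▸ hH) hpH hcH rfl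
  have hcen (x : G) := hc.mk_mem_center_of_forall_ne_top hG (x := x) fun M hM =>
    hsmall (card_lt_of_ne_top hM) (hG.to_subgroup M) (hc.subgroup M)
  exact hc.centralRootsAgree_of_quotient hcen <|
    hsmall (QuotientGroup.card_lt_of_ne_bot (Omega_one_ne_bot hG)) (hG.to_quotient _)
      (hc.quotient_Omega_of_mk_mem_center hcen)

end RootsAgree

section Exponent

variable {G : Type*} [Group G] [Finite G] {p : ℕ} [Fact p.Prime]

theorem IsPCentral.mk_mem_center_of_pow_mem_center (hG : IsPGroup p G) (hc : IsPCentral p G)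
    {x : G} (hx : x ^ p ∈ center G) : (x : G ⧸ Omega G p 1) ∈ center (G ⧸ Omega G p 1) :=
  hc.mk_mem_center_of_forall_ne_top hG
    (fun M _ => (hc.subgroup M).centralRootsAgree (hG.to_subgroup M)) hx

theorem IsPCentral.quotient_Omega (hG : IsPGroup p G) (hc : IsPCentral p G) :
    IsPCentral p (G ⧸ Omega G p 1) :=
  hc.quotient_Omega_of_mk_mem_center fun _ => hc.mk_mem_center_of_pow_mem_center hG

theorem IsPCentral.pow_mem_Omega_of_mk_mem_Omega (hG : IsPGroup p G) (hc : IsPCentral p G)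
    {w : G} (h : (w : G ⧸ Omega G p 1) ∈ Omega (G ⧸ Omega G p 1) p 1) :
    w ^ p ∈ Omega G p 1 := by
  rwa [(hc.quotient_Omega hG).mem_Omega_one_iff, ← QuotientGroup.mk_pow,
    QuotientGroup.eq_one_iff] at h

theorem IsPCentral.pow_mem_center_quotient_Omega (hG : IsPGroup p G) (hc : IsPCentral p G)
    {e : ℕ} (he : ∀ x : G, x ^ p ^ (e + 1) ∈ center G) (y : G ⧸ Omega G p 1) :
    y ^ p ^ e ∈ center (G ⧸ Omega G p 1) := by
  induction y using QuotientGroup.induction_on with | H x => ?_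
  rw [← QuotientGroup.mk_pow]
  exact hc.mk_mem_center_of_pow_mem_center hG (by rw [← pow_mul, ← pow_succ]; exact he x)

theorem IsPCentral.mul_pow_prime_pow (hp : Odd p) (hG : IsPGroup p G) (hc : IsPCentral p G)
    {e : ℕ} (he : ∀ x : G, x ^ p ^ e ∈ center G) (x y : G) :
    (x * y) ^ p ^ e = x ^ p ^ e * y ^ p ^ e := by
  induction e generalizing G with
  | zero => simp
  | succ e ih =>
    obtain ⟨ω, hω, hxy⟩ := QuotientGroup.exists_mem_eq_mul_of_mk_eq (N := Omega G p 1)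
      (a := x ^ p ^ e * y ^ p ^ e) (b := (x * y) ^ p ^ e) <| by
      simpa only [QuotientGroup.mk_mul, QuotientGroup.mk_pow] using
        (ih (hG.to_quotient _) (hc.quotient_Omega hG) (hc.pow_mem_center_quotient_Omega hG he)
          x y).symm
    have hb : (y ^ p ^ e : G ⧸ Omega G p 1) ∈ center (G ⧸ Omega G p 1) :=
      hc.mk_mem_center_of_pow_mem_center hG (by rw [← pow_mul, ← pow_succ]; exact he y)
    rw [pow_succ, pow_mul, pow_mul, pow_mul, hxy, hc.mul_pow_of_mem_Omega hω,
      hc.mul_pow_of_mk_mem_center hp hb]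

end Exponent

section PowerOfTwo

variable {G : Type*} [Group G] [Finite G]

theorem IsPCentral.inv_mul_pow_two_pow_mem_Omega (hG : IsPGroup 2 G) (hc : IsPCentral 2 G)
    {e : ℕ} (he : ∀ x : G, x ^ 2 ^ e ∈ center G) (x y : G) :
    (x ^ 2 ^ e * y ^ 2 ^ e)⁻¹ * (x * y) ^ 2 ^ e ∈ Omega G 2 1 := by
  induction e generalizing G with
  | zero => simp [one_mem]
  | succ e ih =>
    set δ := (x ^ 2 ^ e * y ^ 2 ^ e)⁻¹ * (x * y) ^ 2 ^ e with hδdef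
    have hδ := hc.pow_mem_Omega_of_mk_mem_Omega hG (w := δ) <| by
      simpa only [δ, QuotientGroup.mk_mul, QuotientGroup.mk_inv, QuotientGroup.mk_pow] using
        ih (hG.to_quotient _) (hc.quotient_Omega hG) (hc.pow_mem_center_quotient_Omega hG he) x y
    have hb : (y ^ 2 ^ e : G ⧸ Omega G 2 1) ∈ center (G ⧸ Omega G 2 1) :=
      hc.mk_mem_center_of_pow_mem_center hG (by rw [← pow_mul, ← pow_succ]; exact he y)
    rw [pow_succ, pow_mul, pow_mul, pow_mul,
      ← mul_inv_cancel_left (x ^ 2 ^ e * y ^ 2 ^ e) ((x * y) ^ 2 ^ e), ← hδdef,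
      Commute.mul_pow (mem_center_iff.mp (hc.mem_center_of_sq_mem_Omega hδ) _), ← mul_assoc]
    exact mul_mem (hc.mul_pow_mem_Omega_of_mk_mem_center hb _) hδ

theorem IsPCentral.mul_pow_two_pow_succ (hG : IsPGroup 2 G) (hc : IsPCentral 2 G) {e : ℕ}
    (he : ∀ x : G, x ^ 2 ^ e ∈ center G) (x y : G) :
    (x * y) ^ 2 ^ (e + 1) = x ^ 2 ^ (e + 1) * y ^ 2 ^ (e + 1) := by
  rw [pow_succ, pow_mul, pow_mul, pow_mul,
    ← mul_inv_cancel_left (x ^ 2 ^ e * y ^ 2 ^ e) ((x * y) ^ 2 ^ e),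
    hc.mul_pow_of_mem_Omega (hc.inv_mul_pow_two_pow_mem_Omega hG he x y),
    Commute.mul_pow (mem_center_iff.mp (he x) _).symm]

theorem IsPCentral.mul_pow_quotient_Omega (hG : IsPGroup 2 G) (hc : IsPCentral 2 G) {f : ℕ}
    (hf : ∀ x : G, x ^ 2 ^ (f + 2) ∈ center G)
    (hmul : ∀ x y : G, (x * y) ^ 2 ^ (f + 2) = x ^ 2 ^ (f + 2) * y ^ 2 ^ (f + 2))
    (x y : G ⧸ Omega G 2 1) : (x * y) ^ 2 ^ (f + 1) = x ^ 2 ^ (f + 1) * y ^ 2 ^ (f + 1) := by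
  induction x using QuotientGroup.induction_on with | H x => ?_
  induction y using QuotientGroup.induction_on with | H y => ?_
  simp only [← QuotientGroup.mk_mul, ← QuotientGroup.mk_pow]
  refine (QuotientGroup.eq.mpr ?_).symm
  set δ := (x ^ 2 ^ (f + 1) * y ^ 2 ^ (f + 1))⁻¹ * (x * y) ^ 2 ^ (f + 1) with hδdef
  have hδ := hc.pow_mem_Omega_of_mk_mem_Omega hG (w := δ) <| by
    simpa only [δ, QuotientGroup.mk_mul, QuotientGroup.mk_inv, QuotientGroup.mk_pow] using
      (hc.quotient_Omega hG).inv_mul_pow_two_pow_mem_Omega (hG.to_quotient _)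
        (hc.pow_mem_center_quotient_Omega hG hf) x y
  -- `y ^ 2 ^ (f + 1)` is a square, and `x ^ 2 ^ (f + 1)` is central modulo `Ω`.
  have hab : Commute (x ^ 2 ^ (f + 1)) (y ^ 2 ^ (f + 1)) := by
    rw [pow_succ 2 f, pow_mul y]
    exact hc.commute_pow_of_mk_mem_center
      (hc.mk_mem_center_of_pow_mem_center hG (by rw [← pow_mul, ← pow_succ]; exact hf x)) _
  have h := hmul x y
  rw [pow_succ 2 (f + 1), pow_mul, pow_mul, pow_mul,
    ← mul_inv_cancel_left (x ^ 2 ^ (f + 1) * y ^ 2 ^ (f + 1)) ((x * y) ^ 2 ^ (f + 1)), ← hδdef,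
    Commute.mul_pow (mem_center_iff.mp (hc.mem_center_of_sq_mem_Omega hδ) _), hab.mul_pow,
    mul_eq_left] at h
  rwa [hc.mem_Omega_one_iff]

theorem IsPCentral.pow_two_pow_mem_center_of_mul_pow (hG : IsPGroup 2 G) (hc : IsPCentral 2 G)
    {f : ℕ} (hf : ∀ x : G, x ^ 2 ^ (f + 1) ∈ center G)
    (hmul : ∀ x y : G, (x * y) ^ 2 ^ (f + 1) = x ^ 2 ^ (f + 1) * y ^ 2 ^ (f + 1)) (t : G) :
    t ^ 2 ^ f ∈ center G := by
  induction f generalizing G with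
  | zero =>
    simp only [pow_zero, pow_one, zero_add] at hmul ⊢
    exact mem_center_iff.mpr fun g => commute_of_mul_sq (hmul g t)
  | succ f ih =>
    have h := ih (hG.to_quotient _) (hc.quotient_Omega hG) (hc.pow_mem_center_quotient_Omega hG hf)
      (hc.mul_pow_quotient_Omega hG hf hmul) t
    rw [← QuotientGroup.mk_pow] at h
    rw [pow_succ, pow_mul]
    exact hc.pow_mem_center_of_mk_mem_center h

end PowerOfTwo

theorem stmt_19 (p : ℕ) (hp : p.Prime) (G : Type*) [Group G] [Finite G]
    (hpg : IsPGroup p G) (hcent : IsPCentral p G)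
    (e : ℕ) (he : Monoid.exponent (G ⧸ Subgroup.center G) = p ^ e) :
    (Odd p → ∀ x y : G, (x * y) ^ p ^ e = x ^ p ^ e * y ^ p ^ e) ∧
    (p = 2 → (∃ a b : G, a * b ≠ b * a) →
      ((∀ x y : G, (x * y) ^ 2 ^ (e + 1) = x ^ 2 ^ (e + 1) * y ^ 2 ^ (e + 1)) ∧
        ∃ x y : G, (x * y) ^ 2 ^ e ≠ x ^ 2 ^ e * y ^ 2 ^ e)) := by
  have : Fact p.Prime := ⟨hp⟩
  have hpow : ∀ x : G, x ^ p ^ e ∈ center G := exponent_quotient_center_dvd_iff.mp he.dvd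
  refine ⟨fun hodd => hcent.mul_pow_prime_pow hodd hpg hpow, ?_⟩
  rintro rfl ⟨a, b, hab⟩
  refine ⟨hcent.mul_pow_two_pow_succ hpg hpow, ?_⟩
  by_contra! hmul
  rcases e with _ | f
  · exact hab (mem_center_iff.mp (by simpa using hpow b) a)
  · have hdvd := exponent_quotient_center_dvd_iff.mpr
      (hcent.pow_two_pow_mem_center_of_mul_pow hpg hpow hmul)
    rw [he, Nat.pow_dvd_pow_iff_le_right one_lt_two] at hdvd
    omega
end
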